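/- arXiv:0809.1685 — 7 statements merged into one kernel-verified Lean document; each statement's English description precedes it below -/
import Mathlib

section
/- Let (X, d) be a one-dimensional infrastructure of circumference R > 0. Then the map d̂ : fRep(X, d) → ℝ/Rℤ defined by d̂(x, t) = d(x) + (t mod R) is a bijection. -/
/-!
The inverse of `(x, t) ↦ d x + t` sends `s` to the point `x` of `d(X)` from which `s` is reached
by the shortest forward walk along the circle, with `t` the length of that walk: minimality of
the walk is exactly the f-representation condition, and the forward distance from `d x` to
`d x + t` recovers `t` because `0 ≤ t < R`.
-/

open Function

section Infrastructure

variable {X : Type*} {R : ℝ}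

def IsFRep (d : X → AddCircle R) (x : X) (t : ℝ) : Prop :=
  0 ≤ t ∧ t < R ∧ ∀ (y : X) (u : ℝ), 0 ≤ u → u ≤ t → d y = d x + (u : AddCircle R) → y = x

variable {d : X → AddCircle R}

lemma IsFRep.eq_of_add_eq_of_le {x x' : X} {t t' : ℝ} (hq : IsFRep d x' t')
    (ht : 0 ≤ t) (h : d x + t = d x' + t') (hle : t ≤ t') : x = x' := by
  refine hq.2.2 x (t' - t) (sub_nonneg.2 hle) (by linarith) ?_
  rw [QuotientAddGroup.mk_sub, ← add_sub_assoc, ← h, add_sub_cancel_right]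

variable [Fact (0 < R)]

/-- The length in `[0, R)` of the forward walk along the circle from `a` to `s`. -/
noncomputable def fwdDist (a s : AddCircle R) : ℝ :=
  AddCircle.equivIco R 0 (s - a)

lemma fwdDist_mem_Ico (a s : AddCircle R) : fwdDist a s ∈ Set.Ico 0 R := by
  obtain ⟨h0, hR⟩ := (AddCircle.equivIco R 0 (s - a)).2
  exact ⟨h0, hR.trans_eq (zero_add R)⟩

lemma add_fwdDist (a s : AddCircle R) : a + (fwdDist a s : AddCircle R) = s := by
  simp [fwdDist]

lemma fwdDist_add_coe (a : AddCircle R) {u : ℝ} (hu : u ∈ Set.Ico 0 R) :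
    fwdDist a (a + u) = u := by
  rw [fwdDist, add_sub_cancel_left, AddCircle.equivIco_coe_of_mem (by simpa using hu)]

lemma IsFRep.fwdDist_eq {x : X} {t : ℝ} (h : IsFRep d x t) : fwdDist (d x) (d x + t) = t :=
  fwdDist_add_coe _ ⟨h.1, h.2.1⟩

lemma IsFRep.eq_of_add_eq {x x' : X} {t t' : ℝ} (hp : IsFRep d x t) (hq : IsFRep d x' t')
    (h : d x + t = d x' + t') : x = x' ∧ t = t' := by
  have hx : x = x' := by
    rcases le_total t t' with hle | hle
    · exact hq.eq_of_add_eq_of_le hp.1 h hle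
    · exact (hp.eq_of_add_eq_of_le hq.1 h.symm hle).symm
  subst hx
  exact ⟨rfl, by rw [← hp.fwdDist_eq, h, hq.fwdDist_eq]⟩

lemma exists_isFRep_add_eq [Finite X] [Nonempty X] (hd : Injective d) (s : AddCircle R) :
    ∃ x t, IsFRep d x t ∧ d x + t = s := by
  obtain ⟨x, hx_min⟩ := Finite.exists_min fun y => fwdDist (d y) s
  have hx_mem := fwdDist_mem_Ico (d x) s
  refine ⟨x, fwdDist (d x) s, ⟨hx_mem.1, hx_mem.2, fun y u hu0 hut hy => ?_⟩, add_fwdDist _ _⟩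
  have hy_dist : fwdDist (d y) s = fwdDist (d x) s - u := by
    have h_walk : s = d y + ((fwdDist (d x) s - u : ℝ) : AddCircle R) := by
      rw [hy, QuotientAddGroup.mk_sub, add_add_sub_cancel, add_fwdDist]
    nth_rw 1 [h_walk]
    rw [fwdDist_add_coe _ ⟨by linarith, by linarith [hx_mem.2]⟩]
  have hu : u = 0 := by linarith [hx_min y]
  exact hd (by rw [hy, hu, QuotientAddGroup.mk_zero, add_zero])

end Infrastructure

/-- Let `(X, d)` be a one-dimensional infrastructure of circumference `R > 0`,
i.e. a finite nonempty set `X` with an injective map `d : X → ℝ/Rℤ`. Then the map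
`d̂ : fRep(X, d) → ℝ/Rℤ`, `(x, t) ↦ d(x) + t`, is a bijection, where `fRep(X, d)` is the set of
pairs `(x, t) ∈ X × ℝ` with `0 ≤ t < R` such that `d(x)` is the only point of `d(X)` on the
circle segment `[d(x), d(x) + t]`. -/
theorem stmt0 {X : Type*} [Fintype X] [Nonempty X] {R : ℝ} (hR : 0 < R)
    (d : X → AddCircle R) (hd : Function.Injective d) :
    Function.Bijective
      (fun p : {p : X × ℝ // 0 ≤ p.2 ∧ p.2 < R ∧
          ∀ (y : X) (u : ℝ), 0 ≤ u → u ≤ p.2 →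
            d y = d p.1 + (u : AddCircle R) → y = p.1} =>
        d p.val.1 + ((p.val.2 : ℝ) : AddCircle R)) := by
  have : Fact (0 < R) := ⟨hR⟩
  refine ⟨fun p q h => ?_, fun s => ?_⟩
  · obtain ⟨hx, ht⟩ := IsFRep.eq_of_add_eq p.2 q.2 h
    exact Subtype.ext (Prod.ext hx ht)
  · obtain ⟨x, t, hxt, rfl⟩ := exists_isFRep_add_eq hd s
    exact ⟨⟨(x, t), hxt⟩, rfl⟩
end

section
/- Let (X, d) be a one-dimensional infrastructure of circumference R > 0 with |X| ≥ 2, with baby step map bs and giant step map gs. Define d_max := max over x ∈ X of the unique representative in (0, R) of d(bs(x)) − d(x). Then for all x, y ∈ X, the unique representative ε ∈ [0, R) of d(x) + d(y) − d(gs(x, y)) satisfies 0 ≤ ε < d_max; in particular d(gs(x, y)) = d(x) + d(y) − ε with 0 ≤ ε < d_max. -/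
/-!
The arc from `d(gs x y)` of length `ε` contains no point of `X` other than `z := gs x y`,
whereas the baby step puts the point `bs z ≠ z` at distance `δ z` from `z`.
Hence `ε < δ z ≤ d_max`.
-/

theorem lt_of_ne_of_forall_eq_of_mem_arc {X : Type*} {R : ℝ} (d : X → AddCircle R)
    {z w : X} {τ δ : ℝ} (hδ : 0 ≤ δ) (hw : d w = d z + (δ : AddCircle R)) (hwz : w ≠ z)
    (harc : ∀ (v : X) (u : ℝ), 0 ≤ u → u ≤ τ → d v = d z + (u : AddCircle R) → v = z) :
    τ < δ := by
  by_contra! hτδ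
  exact hwz (harc w δ hδ hτδ hw)

theorem stmt3_general {X : Type*} {R : ℝ} (hR : 0 < R)
    (d : X → AddCircle R)
    (bs : X → X) (gs : X → X → X) (δ : X → ℝ)
    (hδ : ∀ x : X, 0 < δ x ∧ δ x < R ∧ ((δ x : ℝ) : AddCircle R) = d (bs x) - d x)
    (hbs : ∀ x : X, bs x ≠ x ∧
      ∀ (z : X) (u : ℝ), 0 ≤ u → u ≤ δ x → d z = d x + ((u : ℝ) : AddCircle R) →
        z = x ∨ z = bs x)
    (hgs : ∀ x y : X, ∃ τ : ℝ, 0 ≤ τ ∧ τ < R ∧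
      ((τ : ℝ) : AddCircle R) = (d x + d y) - d (gs x y) ∧
      ∀ (w : X) (u : ℝ), 0 ≤ u → u ≤ τ → d w = d (gs x y) + ((u : ℝ) : AddCircle R) →
        w = gs x y)
    (dmax : ℝ) (hdmax : IsGreatest (Set.range δ) dmax) :
    ∀ x y : X, ∀ ε : ℝ, 0 ≤ ε → ε < R →
      ((ε : ℝ) : AddCircle R) = (d x + d y) - d (gs x y) →
      ε < dmax ∧ d (gs x y) = d x + d y - ((ε : ℝ) : AddCircle R) := by
  have : Fact (0 < R) := ⟨hR⟩
  intro x y ε hε0 hεR hεeq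
  obtain ⟨τ, hτ0, hτR, hτeq, harc⟩ := hgs x y
  have hετ : ε = τ :=
    (AddCircle.coe_eq_coe_iff_of_mem_Ico (a := 0) ⟨hε0, by rwa [zero_add]⟩
      ⟨hτ0, by rwa [zero_add]⟩).mp (hεeq.trans hτeq.symm)
  set z := gs x y
  have hbs_z : d (bs z) = d z + (δ z : AddCircle R) := by
    rw [(hδ z).2.2]
    abel
  have hτδ : τ < δ z := lt_of_ne_of_forall_eq_of_mem_arc d (hδ z).1.le hbs_z (hbs z).1 harc
  refine ⟨by linarith [hdmax.2 ⟨z, rfl⟩], ?_⟩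
  rw [hεeq]
  abel

/-- Let `(X, d)` be a one-dimensional infrastructure of circumference `R > 0`
with `|X| ≥ 2`, with baby step map `bs` (with distances `δ x ∈ (0, R)` representing
`d(bs x) − d(x)`) and giant step map `gs`. Let `d_max` be the maximum of the `δ x`.
Then for all `x, y ∈ X` the unique representative `ε ∈ [0, R)` of `d(x) + d(y) − d(gs(x, y))`
satisfies `0 ≤ ε < d_max`; in particular `d(gs(x, y)) = d(x) + d(y) − ε`. -/
theorem stmt3 {X : Type*} [Fintype X] {R : ℝ} (hR : 0 < R)
    (hX : 2 ≤ Fintype.card X)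
    (d : X → AddCircle R) (hd : Function.Injective d)
    (bs : X → X) (gs : X → X → X) (δ : X → ℝ)
    (hδ : ∀ x : X, 0 < δ x ∧ δ x < R ∧ ((δ x : ℝ) : AddCircle R) = d (bs x) - d x)
    (hbs : ∀ x : X, bs x ≠ x ∧
      ∀ (z : X) (u : ℝ), 0 ≤ u → u ≤ δ x → d z = d x + ((u : ℝ) : AddCircle R) →
        z = x ∨ z = bs x)
    (hgs : ∀ x y : X, ∃ τ : ℝ, 0 ≤ τ ∧ τ < R ∧
      ((τ : ℝ) : AddCircle R) = (d x + d y) - d (gs x y) ∧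
      ∀ (w : X) (u : ℝ), 0 ≤ u → u ≤ τ → d w = d (gs x y) + ((u : ℝ) : AddCircle R) →
        w = gs x y)
    (dmax : ℝ) (hdmax : IsGreatest (Set.range δ) dmax) :
    ∀ x y : X, ∀ ε : ℝ, 0 ≤ ε → ε < R →
      ((ε : ℝ) : AddCircle R) = (d x + d y) - d (gs x y) →
      ε < dmax ∧ d (gs x y) = d x + d y - ((ε : ℝ) : AddCircle R) :=
  stmt3_general hR d bs gs δ hδ hbs hgs dmax hdmax
end

section
/- Let K be a number field having at least one real infinite place, and let 𝔟 be a reduced nonzero fractional ideal of 𝒪_K. Then {h ∈ 𝔟 : w(h) ≤ 1 for all infinite places w of K} = {−1, 0, 1}. -/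
open NumberField
open scoped nonZeroDivisors

/-- A nonzero fractional ideal `𝔟` of the ring of integers of a number field `K` is *reduced*
if `1 ∈ 𝔟` and `1` is a minimum of `𝔟`, i.e. every `h ∈ 𝔟` with `w(h) ≤ 1` for all infinite
places `w` is `0` or has `w(h) = 1` for all infinite places `w`. -/
def IsReducedIdeal {K : Type*} [Field K] [NumberField K]
    (𝔟 : FractionalIdeal (𝓞 K)⁰ K) : Prop :=
  (1 : K) ∈ 𝔟 ∧ ∀ h : K, h ∈ 𝔟 → (∀ w : InfinitePlace K, w h ≤ 1) →
    h = 0 ∨ ∀ w : InfinitePlace K, w h = 1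

namespace NumberField.InfinitePlace

theorem eq_one_or_eq_neg_one_of_isReal {K : Type*} [Field K] {w : InfinitePlace K}
    (hw : w.IsReal) {x : K} (hx : w x = 1) : x = 1 ∨ x = -1 := by
  have habs : |embedding_of_isReal hw x| = 1 := by
    rw [← Real.norm_eq_abs, norm_embedding_of_isReal, hx]
  have hinj := (embedding_of_isReal hw).injective
  rcases abs_eq zero_le_one |>.mp habs with h | h
  · exact Or.inl (hinj (by rw [h, map_one]))
  · exact Or.inr (hinj (by rw [h, map_neg, map_one]))

end NumberField.InfinitePlace

theorem stmt5_general {K : Type*} [Field K] [NumberField K]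
    (hreal : ∃ w : InfinitePlace K, w.IsReal)
    (𝔟 : FractionalIdeal (𝓞 K)⁰ K)
    (hred : IsReducedIdeal 𝔟) :
    {h : K | h ∈ 𝔟 ∧ ∀ w : InfinitePlace K, w h ≤ 1} = {-1, 0, 1} := by
  obtain ⟨w₀, hw₀⟩ := hreal
  obtain ⟨hone, hmin⟩ := hred
  ext h
  simp only [Set.mem_ofPred_eq, Set.mem_insert_iff, Set.mem_singleton_iff]
  constructor
  · rintro ⟨hmem, hle⟩
    rcases hmin h hmem hle with h0 | hall
    · exact Or.inr (Or.inl h0)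
    · rcases InfinitePlace.eq_one_or_eq_neg_one_of_isReal hw₀ (hall w₀) with h1 | h1
      · exact Or.inr (Or.inr h1)
      · exact Or.inl h1
  · rintro (rfl | rfl | rfl)
    · exact ⟨(𝔟 : Submodule (𝓞 K) K).neg_mem hone,
      fun w => ((w.1.map_neg 1).trans (map_one w)).le⟩
    · exact ⟨𝔟.zero_mem, fun w => (map_zero w).trans_le zero_le_one⟩
    · exact ⟨hone, fun w => (map_one w).le⟩

/-- Let `K` be a number field having at least one real infinite place, and let
`𝔟` be a reduced nonzero fractional ideal of `𝒪_K`. Then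
`{h ∈ 𝔟 : w(h) ≤ 1 for all infinite places w} = {−1, 0, 1}`. -/
theorem stmt5 {K : Type*} [Field K] [NumberField K]
    (hreal : ∃ w : InfinitePlace K, w.IsReal)
    (𝔟 : FractionalIdeal (𝓞 K)⁰ K) (h𝔟 : 𝔟 ≠ 0)
    (hred : IsReducedIdeal 𝔟) :
    {h : K | h ∈ 𝔟 ∧ ∀ w : InfinitePlace K, w h ≤ 1} = {-1, 0, 1} :=
  stmt5_general hreal 𝔟 hred
end

section
/- Let K be a number field having at least one real infinite place, and let 𝔟 and 𝔟' be reduced nonzero fractional ideals of 𝒪_K. If there exists h ∈ K^* with 𝔟 = h𝔟' and w(h) = 1 for all infinite places w of K, then 𝔟 = 𝔟'. -/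
open NumberField
open scoped nonZeroDivisors

theorem NumberField.InfinitePlace.eq_one_or_eq_neg_one_of_isReal_s6 {K : Type*} [Field K]
    {w : InfinitePlace K} (hw : w.IsReal) {x : K} (hx : w x = 1) : x = 1 ∨ x = -1 := by
  set σ := embedding_of_isReal hw
  have hσx : |σ x| = 1 := by rw [← Real.norm_eq_abs, norm_embedding_of_isReal, hx]
  rcases abs_eq zero_le_one |>.mp hσx with hσx | hσx
  · exact .inl (σ.injective (by rw [hσx, map_one]))
  · exact .inr (σ.injective (by rw [hσx, map_neg, map_one]))

theorem FractionalIdeal.spanSingleton_neg {R : Type*} [CommRing R] {S : Submonoid R}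
    {P : Type*} [CommRing P] [Algebra R P] [IsLocalization S P] (x : P) :
    spanSingleton S (-x) = spanSingleton S x := by
  rw [← coeToSubmodule_inj, coe_spanSingleton, coe_spanSingleton, ← Set.neg_singleton,
    Submodule.span_neg]

theorem stmt6_general {K : Type*} [Field K] [NumberField K]
    (hreal : ∃ w : InfinitePlace K, w.IsReal)
    (𝔟 𝔟' : FractionalIdeal (𝓞 K)⁰ K)
    (h : K)
    (heq : 𝔟 = FractionalIdeal.spanSingleton (𝓞 K)⁰ h * 𝔟')
    (habs : ∀ w : InfinitePlace K, w h = 1) :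
    𝔟 = 𝔟' := by
  obtain ⟨w, hw⟩ := hreal
  have hspan : FractionalIdeal.spanSingleton (𝓞 K)⁰ h = 1 := by
    rcases InfinitePlace.eq_one_or_eq_neg_one_of_isReal_s6 hw (habs w) with rfl | rfl
    · exact FractionalIdeal.spanSingleton_one
    · rw [FractionalIdeal.spanSingleton_neg, FractionalIdeal.spanSingleton_one]
  rw [heq, hspan, one_mul]

/-- Let `K` be a number field having at least one real infinite place, and let
`𝔟`, `𝔟'` be reduced nonzero fractional ideals of `𝒪_K`. If there is `h ∈ K^*` with `𝔟 = h𝔟'`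
and `w(h) = 1` for all infinite places `w`, then `𝔟 = 𝔟'`. -/
theorem stmt6 {K : Type*} [Field K] [NumberField K]
    (hreal : ∃ w : InfinitePlace K, w.IsReal)
    (𝔟 𝔟' : FractionalIdeal (𝓞 K)⁰ K) (h𝔟 : 𝔟 ≠ 0) (h𝔟' : 𝔟' ≠ 0)
    (hred : IsReducedIdeal 𝔟) (hred' : IsReducedIdeal 𝔟')
    (h : K) (hh : h ≠ 0)
    (heq : 𝔟 = FractionalIdeal.spanSingleton (𝓞 K)⁰ h * 𝔟')
    (habs : ∀ w : InfinitePlace K, w h = 1) :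
    𝔟 = 𝔟' :=
  stmt6_general hreal 𝔟 𝔟' h heq habs
end

section
/- Let K be a number field and let 𝔟 and 𝔟' be reduced nonzero fractional ideals of 𝒪_K. Then the following are equivalent: (i) there exists h ∈ K^* with 𝔟 = h𝔟' and w(h) = 1 for all infinite places w of K; (ii) there exists a nonzero element h ∈ 𝔟·𝔟'⁻¹ with w(h) ≤ 1 for all infinite places w of K, and the absolute norms of 𝔟 and 𝔟' are equal. -/
open NumberField
open scoped nonZeroDivisors

/-!
If `𝔟 = h𝔟'` with `w(h) = 1` for all `w`, then `h ∈ 𝔟𝔟'⁻¹` and `|N(h)| = ∏_w w(h)^{d_w} = 1`,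
so the norms agree. Conversely, `h ∈ 𝔟𝔟'⁻¹` means `h𝔟' ⊆ 𝔟`; as `1 ∈ 𝔟'` this puts `h` in `𝔟`,
and minimality of `1` in `𝔟` forces `w(h) = 1` for all `w`. Then `h𝔟'` and `𝔟` have the same
norm, and an inclusion of fractional ideals of equal norm is an equality, since the quotient
`h𝔟'𝔟⁻¹` is an integral ideal of norm one.
-/

namespace FractionalIdeal

variable {R : Type*} [CommRing R] [IsDedekindDomain R] {K : Type*} [Field K] [Algebra R K]
  [IsFractionRing R K]

theorem mem_mul_inv_iff_spanSingleton_mul_le {I J : FractionalIdeal R⁰ K} (hJ : J ≠ 0) {x : K} :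
    x ∈ I * J⁻¹ ↔ spanSingleton R⁰ x * J ≤ I := by
  rw [← div_eq_mul_inv, ← spanSingleton_le_iff_mem, le_div_iff_mul_le hJ]

variable [Module.Free ℤ R] [Module.Finite ℤ R]

theorem eq_one_of_le_one_of_absNorm_eq_one {I : FractionalIdeal R⁰ K} (hle : I ≤ 1)
    (hnorm : absNorm I = 1) : I = 1 := by
  obtain ⟨J, rfl⟩ := le_one_iff_exists_coeIdeal.mp hle
  rw [coeIdeal_absNorm, Nat.cast_eq_one, Ideal.absNorm_eq_one_iff] at hnorm
  rw [hnorm, coeIdeal_top]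

theorem eq_of_le_of_absNorm_eq {I J : FractionalIdeal R⁰ K} (hJ : J ≠ 0) (hle : I ≤ J)
    (hnorm : absNorm I = absNorm J) : I = J := by
  have hJnorm : absNorm J ≠ 0 := absNorm_eq_zero_iff.not.mpr hJ
  have hquot : I * J⁻¹ = 1 := by
    refine eq_one_of_le_one_of_absNorm_eq_one ?_ ?_
    · exact (mul_le_mul_left hle J⁻¹).trans (mul_inv_cancel₀ hJ).le
    · rw [map_mul, map_inv₀, hnorm, mul_inv_cancel₀ hJnorm]
  exact (mul_inv_eq_one₀ hJ).mp hquot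

end FractionalIdeal

section NumberField

variable {K : Type*} [Field K] [NumberField K]

theorem absNorm_spanSingleton_eq_one_of_forall_infinitePlace_eq_one {h : K}
    (hw : ∀ w : InfinitePlace K, w h = 1) :
    FractionalIdeal.absNorm (FractionalIdeal.spanSingleton (𝓞 K)⁰ h) = 1 := by
  have hprod := InfinitePlace.prod_eq_abs_norm h
  simp only [hw, one_pow, Finset.prod_const_one] at hprod
  rw [FractionalIdeal.absNorm_span_singleton]
  exact_mod_cast hprod.symm

theorem IsReducedIdeal.ne_zero {𝔟 : FractionalIdeal (𝓞 K)⁰ K} (hred : IsReducedIdeal 𝔟) :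
    𝔟 ≠ 0 := by
  rintro rfl
  simpa using hred.1

end NumberField

theorem stmt7_general {K : Type*} [Field K] [NumberField K]
    (𝔟 𝔟' : FractionalIdeal (𝓞 K)⁰ K)
    (hred : IsReducedIdeal 𝔟) (hred' : IsReducedIdeal 𝔟') :
    (∃ h : K, h ≠ 0 ∧ 𝔟 = FractionalIdeal.spanSingleton (𝓞 K)⁰ h * 𝔟' ∧
      ∀ w : InfinitePlace K, w h = 1) ↔
    ((∃ h : K, h ∈ 𝔟 * 𝔟'⁻¹ ∧ h ≠ 0 ∧ ∀ w : InfinitePlace K, w h ≤ 1) ∧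
      FractionalIdeal.absNorm 𝔟 = FractionalIdeal.absNorm 𝔟') := by
  open FractionalIdeal in
  constructor
  · rintro ⟨h, hne, rfl, hw⟩
    refine ⟨⟨h, (mem_mul_inv_iff_spanSingleton_mul_le hred'.ne_zero).mpr le_rfl, hne,
      fun w ↦ (hw w).le⟩, ?_⟩
    rw [map_mul, absNorm_spanSingleton_eq_one_of_forall_infinitePlace_eq_one hw, one_mul]
  · rintro ⟨⟨h, hmem, hne, hle⟩, hnorm⟩
    have hsub := (mem_mul_inv_iff_spanSingleton_mul_le hred'.ne_zero).mp hmem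
    have hh𝔟 : h ∈ 𝔟 := hsub (by simpa using mul_mem_mul (mem_spanSingleton_self _ h) hred'.1)
    have hw : ∀ w : InfinitePlace K, w h = 1 := (hred.2 h hh𝔟 hle).resolve_left hne
    refine ⟨h, hne, (eq_of_le_of_absNorm_eq hred.ne_zero hsub ?_).symm, hw⟩
    rw [map_mul, absNorm_spanSingleton_eq_one_of_forall_infinitePlace_eq_one hw, one_mul, hnorm]

/-- Let `K` be a number field and `𝔟`, `𝔟'` reduced nonzero fractional ideals
of `𝒪_K`. The following are equivalent: (i) there exists `h ∈ K^*` with `𝔟 = h𝔟'` and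
`w(h) = 1` for all infinite places `w`; (ii) there exists a nonzero `h ∈ 𝔟·𝔟'⁻¹` with
`w(h) ≤ 1` for all infinite places `w`, and the absolute norms of `𝔟` and `𝔟'` agree. -/
theorem stmt7 {K : Type*} [Field K] [NumberField K]
    (𝔟 𝔟' : FractionalIdeal (𝓞 K)⁰ K) (h𝔟 : 𝔟 ≠ 0) (h𝔟' : 𝔟' ≠ 0)
    (hred : IsReducedIdeal 𝔟) (hred' : IsReducedIdeal 𝔟') :
    (∃ h : K, h ≠ 0 ∧ 𝔟 = FractionalIdeal.spanSingleton (𝓞 K)⁰ h * 𝔟' ∧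
      ∀ w : InfinitePlace K, w h = 1) ↔
    ((∃ h : K, h ∈ 𝔟 * 𝔟'⁻¹ ∧ h ≠ 0 ∧ ∀ w : InfinitePlace K, w h ≤ 1) ∧
      FractionalIdeal.absNorm 𝔟 = FractionalIdeal.absNorm 𝔟') :=
  stmt7_general 𝔟 𝔟' hred hred'
end

section
/- Let K be a number field, S its set of infinite places, and fix a distinguished infinite place w₀ ∈ S. Let 𝔞 be a nonzero fractional ideal of 𝒪_K and let μ, μ' ∈ K^* be such that the fractional ideals (1/μ)𝔞 and (1/μ')𝔞 are both reduced. If there exists a unit ε ∈ 𝒪_K^* such that w(μ) = w(εμ') for all w ∈ S ∖ {w₀}, then there exists h ∈ K^* with (1/μ)𝔞 = h·(1/μ')𝔞 and w(h) = 1 for all w ∈ S. -/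
/-!
Put `h = εμ'/μ`, so that `(1/μ)𝔞 = h·(1/μ')𝔞` and `w(h) = 1` away from `w₀`. Since `1` lies in
both ideals, `h ∈ (1/μ)𝔞` and `h⁻¹ ∈ (1/μ')𝔞`. Whichever of `h`, `h⁻¹` has `w₀`-value at most
`1` is then bounded by `1` at every place, and minimality of `1` forces all its values to be `1`.
-/

open NumberField
open scoped nonZeroDivisors

namespace FractionalIdeal

theorem ne_zero_of_eq_spanSingleton_mul {R P : Type*} [CommRing R] [CommRing P] [Algebra R P]
    {S : Submonoid R} [IsLocalization S P] {𝔟 𝔟' : FractionalIdeal S P} {h : P} (h𝔟 : 𝔟 ≠ 0)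
    (heq : 𝔟 = spanSingleton S h * 𝔟') : h ≠ 0 := by
  rintro rfl
  simp [heq] at h𝔟

theorem eq_spanSingleton_inv_mul {R K : Type*} [CommRing R] [Field K] [Algebra R K]
    {S : Submonoid R} [IsLocalization S K] {𝔟 𝔟' : FractionalIdeal S K} {h : K} (hh : h ≠ 0)
    (heq : 𝔟 = spanSingleton S h * 𝔟') : 𝔟' = spanSingleton S h⁻¹ * 𝔟 := by
  rw [heq, ← mul_assoc, spanSingleton_mul_spanSingleton, inv_mul_cancel₀ hh, spanSingleton_one,
    one_mul]

end FractionalIdeal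

namespace IsReducedIdeal

open FractionalIdeal

variable {K : Type*} [Field K] [NumberField K] {𝔟 𝔟' : FractionalIdeal (𝓞 K)⁰ K}

theorem ne_zero_s8 (h𝔟 : IsReducedIdeal 𝔟) : 𝔟 ≠ 0 := by
  rintro rfl
  simpa using h𝔟.1

theorem ne_zero_of_spanSingleton_mul {x : K} {𝔞 : FractionalIdeal (𝓞 K)⁰ K}
    (h𝔟 : IsReducedIdeal (spanSingleton (𝓞 K)⁰ x * 𝔞)) : x ≠ 0 :=
  ne_zero_of_eq_spanSingleton_mul h𝔟.ne_zero_s8 rfl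

theorem infinitePlace_eq_one_of_le_one (h𝔟 : IsReducedIdeal 𝔟) (h𝔟' : (1 : K) ∈ 𝔟') {h : K}
    (heq : 𝔟 = spanSingleton (𝓞 K)⁰ h * 𝔟') (hle : ∀ w : InfinitePlace K, w h ≤ 1) :
    ∀ w : InfinitePlace K, w h = 1 := by
  have hmem : h ∈ 𝔟 := by
    simpa [heq] using mul_mem_mul (mem_spanSingleton_self (𝓞 K)⁰ h) h𝔟'
  exact (h𝔟.2 h hmem hle).resolve_left (ne_zero_of_eq_spanSingleton_mul h𝔟.ne_zero_s8 heq)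

theorem infinitePlace_eq_one_of_forall_ne (h𝔟 : IsReducedIdeal 𝔟) (h𝔟' : IsReducedIdeal 𝔟')
    {h : K} (heq : 𝔟 = spanSingleton (𝓞 K)⁰ h * 𝔟') (w₀ : InfinitePlace K)
    (hw : ∀ w : InfinitePlace K, w ≠ w₀ → w h = 1) : ∀ w : InfinitePlace K, w h = 1 := by
  by_cases h₀ : w₀ h ≤ 1
  · refine h𝔟.infinitePlace_eq_one_of_le_one h𝔟'.1 heq fun w ↦ ?_
    rcases eq_or_ne w w₀ with rfl | hne
    exacts [h₀, (hw w hne).le]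
  · have hh : h ≠ 0 := ne_zero_of_eq_spanSingleton_mul h𝔟.ne_zero_s8 heq
    have hinv := h𝔟'.infinitePlace_eq_one_of_le_one h𝔟.1 (eq_spanSingleton_inv_mul hh heq)
      fun w ↦ by
        rcases eq_or_ne w w₀ with rfl | hne
        · simpa using inv_le_one_of_one_le₀ (le_of_not_ge h₀)
        · simp [hw w hne]
    simpa using hinv

end IsReducedIdeal

theorem stmt8_general {K : Type*} [Field K] [NumberField K]
    (w₀ : InfinitePlace K)
    (𝔞 : FractionalIdeal (𝓞 K)⁰ K)
    (μ μ' : K)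
    (hred : IsReducedIdeal (FractionalIdeal.spanSingleton (𝓞 K)⁰ μ⁻¹ * 𝔞))
    (hred' : IsReducedIdeal (FractionalIdeal.spanSingleton (𝓞 K)⁰ μ'⁻¹ * 𝔞))
    (hε : ∃ ε : (𝓞 K)ˣ, ∀ w : InfinitePlace K, w ≠ w₀ →
      w μ = w ((algebraMap (𝓞 K) K ε) * μ')) :
    ∃ h : K, h ≠ 0 ∧
      FractionalIdeal.spanSingleton (𝓞 K)⁰ μ⁻¹ * 𝔞 =
        FractionalIdeal.spanSingleton (𝓞 K)⁰ h *
          (FractionalIdeal.spanSingleton (𝓞 K)⁰ μ'⁻¹ * 𝔞) ∧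
      ∀ w : InfinitePlace K, w h = 1 := by
  obtain ⟨ε, hεw⟩ := hε
  have hμ : μ ≠ 0 := by simpa using hred.ne_zero_of_spanSingleton_mul
  have hμ' : μ' ≠ 0 := by simpa using hred'.ne_zero_of_spanSingleton_mul
  set h : K := algebraMap (𝓞 K) K ε * μ' / μ
  have heq : FractionalIdeal.spanSingleton (𝓞 K)⁰ μ⁻¹ * 𝔞 =
      FractionalIdeal.spanSingleton (𝓞 K)⁰ h *
        (FractionalIdeal.spanSingleton (𝓞 K)⁰ μ'⁻¹ * 𝔞) := by
    rw [← mul_assoc, FractionalIdeal.spanSingleton_mul_spanSingleton]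
    congr 1
    refine FractionalIdeal.spanSingleton_eq_spanSingleton.mpr ⟨ε, ?_⟩
    rw [Units.smul_def, Algebra.smul_def]
    simp only [h]
    field_simp
  have hw : ∀ w : InfinitePlace K, w ≠ w₀ → w h = 1 := fun w hne ↦ by
    simp [h, map_div₀, ← hεw w hne, hμ]
  exact ⟨h, FractionalIdeal.ne_zero_of_eq_spanSingleton_mul hred.ne_zero_s8 heq, heq,
    hred.infinitePlace_eq_one_of_forall_ne hred' heq w₀ hw⟩

/-- Let `K` be a number field, `S` its infinite places, `w₀ ∈ S`
distinguished. Let `𝔞` be a nonzero fractional ideal and `μ, μ' ∈ K^*` with `(1/μ)𝔞` and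
`(1/μ')𝔞` both reduced. If there is a unit `ε ∈ 𝒪_K^*` with `w(μ) = w(εμ')` for all
`w ∈ S ∖ {w₀}`, then there is `h ∈ K^*` with `(1/μ)𝔞 = h·(1/μ')𝔞` and `w(h) = 1` for all
`w ∈ S`. -/
theorem stmt8 {K : Type*} [Field K] [NumberField K]
    (w₀ : InfinitePlace K)
    (𝔞 : FractionalIdeal (𝓞 K)⁰ K) (h𝔞 : 𝔞 ≠ 0)
    (μ μ' : K) (hμ : μ ≠ 0) (hμ' : μ' ≠ 0)
    (hred : IsReducedIdeal (FractionalIdeal.spanSingleton (𝓞 K)⁰ μ⁻¹ * 𝔞))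
    (hred' : IsReducedIdeal (FractionalIdeal.spanSingleton (𝓞 K)⁰ μ'⁻¹ * 𝔞))
    (hε : ∃ ε : (𝓞 K)ˣ, ∀ w : InfinitePlace K, w ≠ w₀ →
      w μ = w ((algebraMap (𝓞 K) K ε) * μ')) :
    ∃ h : K, h ≠ 0 ∧
      FractionalIdeal.spanSingleton (𝓞 K)⁰ μ⁻¹ * 𝔞 =
        FractionalIdeal.spanSingleton (𝓞 K)⁰ h *
          (FractionalIdeal.spanSingleton (𝓞 K)⁰ μ'⁻¹ * 𝔞) ∧
      ∀ w : InfinitePlace K, w h = 1 :=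
  stmt8_general w₀ 𝔞 μ μ' hred hred' hε
end

section
/- Let K be a number field and 𝔞 a nonzero fractional ideal of 𝒪_K. Then there exists a nonzero element μ ∈ 𝔞 that is a minimum of 𝔞; consequently the fractional ideal (1/μ)𝔞 is reduced, and the set of reduced fractional ideals in the ideal class of 𝔞 is nonempty. -/
open NumberField
open scoped nonZeroDivisors

/-- A nonzero element `μ` of a fractional ideal `𝔞` of the ring of integers of a number field
`K` is a *minimum* of `𝔞` if every `h ∈ 𝔞` with `w(h) ≤ w(μ)` for all infinite places `w` is
`0` or satisfies `w(h) = w(μ)` for all infinite places `w`. -/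
def IsMinimumOf {K : Type*} [Field K] [NumberField K]
    (𝔞 : FractionalIdeal (𝓞 K)⁰ K) (μ : K) : Prop :=
  μ ∈ 𝔞 ∧ μ ≠ 0 ∧ ∀ h : K, h ∈ 𝔞 → (∀ w : InfinitePlace K, w h ≤ w μ) →
    h = 0 ∨ ∀ w : InfinitePlace K, w h = w μ

section

open InfinitePlace

variable {K : Type*} [Field K] [NumberField K]

theorem FractionalIdeal.finite_setOf_mem_forall_infinitePlace_le
    (𝔞 : FractionalIdeal (𝓞 K)⁰ K) (r : ℝ) :
    {h : K | h ∈ 𝔞 ∧ ∀ w : InfinitePlace K, w h ≤ r}.Finite := by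
  obtain ⟨d, hd, hd𝔞⟩ := 𝔞.isFractional
  set c : K := algebraMap (𝓞 K) K d
  have hc : c ≠ 0 := by simpa [c] using nonZeroDivisors.ne_zero hd
  -- Clearing the denominator `c` lands in the integers of bounded house, a finite set.
  refine ((Embeddings.finite_of_norm_le K ℂ (house c * r)).preimage
    (mul_right_injective₀ hc).injOn).subset ?_
  rintro h ⟨h𝔞, hr⟩
  obtain ⟨y, hy⟩ := hd𝔞 h h𝔞
  refine ⟨?_, fun φ => ?_⟩
  · change IsIntegral ℤ (c * h)
    rw [← Algebra.smul_def, ← hy]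
    exact RingOfIntegers.isIntegral_coe y
  · rw [map_mul, norm_mul]
    exact mul_le_mul (norm_embedding_le_house c φ) (hr (mk φ)) (norm_nonneg _) (house_nonneg c)

theorem exists_isMinimumOf (𝔞 : FractionalIdeal (𝓞 K)⁰ K) (h𝔞 : 𝔞 ≠ 0) :
    ∃ μ : K, IsMinimumOf 𝔞 μ := by
  obtain ⟨x, hx𝔞, hx0⟩ : ∃ x ∈ 𝔞, x ≠ 0 := by
    simpa [FractionalIdeal.eq_zero_iff] using h𝔞
  -- A nonzero element of `𝔞` dominated by `x` with least `∑ w, w ·` is a minimum: anything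
  -- it dominates is dominated by `x` too, so has no smaller sum and hence the same values.
  set T := {h : K | h ∈ 𝔞 ∧ h ≠ 0 ∧ ∀ w : InfinitePlace K, w h ≤ w x}
  have hT : T.Finite :=
    (𝔞.finite_setOf_mem_forall_infinitePlace_le (∑ w : InfinitePlace K, w x)).subset
      fun h ⟨h𝔞, _, hle⟩ => ⟨h𝔞, fun w => (hle w).trans <|
        Finset.single_le_sum (fun v _ => apply_nonneg v x) (Finset.mem_univ w)⟩
  obtain ⟨μ, ⟨hμ𝔞, hμ0, hμx⟩, hμmin⟩ :=
    T.exists_min_image (fun h => ∑ w : InfinitePlace K, w h) hT ⟨x, hx𝔞, hx0, fun _ => le_rfl⟩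
  refine ⟨μ, hμ𝔞, hμ0, fun h h𝔞 hle => or_iff_not_imp_left.2 fun h0 w => ?_⟩
  have hsum : ∑ w : InfinitePlace K, w h = ∑ w : InfinitePlace K, w μ :=
    (Finset.sum_le_sum fun w _ => hle w).antisymm
      (hμmin h ⟨h𝔞, h0, fun w => (hle w).trans (hμx w)⟩)
  exact (Finset.sum_eq_sum_iff_of_le fun w _ => hle w).1 hsum w (Finset.mem_univ w)

theorem IsMinimumOf.isReducedIdeal_spanSingleton_inv_mul
    {𝔞 : FractionalIdeal (𝓞 K)⁰ K} {μ : K} (hμ : IsMinimumOf 𝔞 μ) :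
    IsReducedIdeal (FractionalIdeal.spanSingleton (𝓞 K)⁰ μ⁻¹ * 𝔞) := by
  obtain ⟨hμ𝔞, hμ0, hmin⟩ := hμ
  refine ⟨FractionalIdeal.mem_singleton_mul.2 ⟨μ, hμ𝔞, (inv_mul_cancel₀ hμ0).symm⟩, ?_⟩
  rintro _ hh hle
  obtain ⟨y, hy𝔞, rfl⟩ := FractionalIdeal.mem_singleton_mul.1 hh
  have hwμ (w : InfinitePlace K) : 0 < w μ := pos_iff.2 hμ0
  simp only [map_mul, map_inv₀, inv_mul_le_one₀ (hwμ _), inv_mul_eq_one₀ (hwμ _).ne', mul_eq_zero,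
    inv_eq_zero, hμ0, false_or] at hle ⊢
  simpa only [eq_comm] using hmin y hy𝔞 hle

end

/-- Let `K` be a number field and `𝔞` a nonzero fractional ideal of `𝒪_K`.
Then `𝔞` has a nonzero minimum `μ`; consequently `(1/μ)𝔞` is reduced, and the set of reduced
fractional ideals in the ideal class of `𝔞` is nonempty. -/
theorem stmt10 {K : Type*} [Field K] [NumberField K]
    (𝔞 : FractionalIdeal (𝓞 K)⁰ K) (h𝔞 : 𝔞 ≠ 0) :
    (∃ μ : K, IsMinimumOf 𝔞 μ ∧
      IsReducedIdeal (FractionalIdeal.spanSingleton (𝓞 K)⁰ μ⁻¹ * 𝔞)) ∧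
    {𝔟 : FractionalIdeal (𝓞 K)⁰ K |
      (∃ μ : K, μ ≠ 0 ∧ 𝔟 = FractionalIdeal.spanSingleton (𝓞 K)⁰ μ⁻¹ * 𝔞) ∧
      IsReducedIdeal 𝔟}.Nonempty := by
  obtain ⟨μ, hμ⟩ := exists_isMinimumOf 𝔞 h𝔞
  exact ⟨⟨μ, hμ, hμ.isReducedIdeal_spanSingleton_inv_mul⟩,
    _, ⟨μ, hμ.2.1, rfl⟩, hμ.isReducedIdeal_spanSingleton_inv_mul⟩
end
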